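/- Let ψ : [0, t*) → ℝ be a positive, twice-differentiable function satisfying ψ''(t)ψ(t) - (1+θ)(ψ'(t))² ≥ 0 for some θ > 0, with ψ(0) > 0 and ψ'(0) > 0. Then ψ(t) → ∞ as t → t₋ for some t₋ ≤ ψ(0)/(θ ψ'(0)). -/

import Mathlib

open Set Filter Topology Real

/-!
The substitution `u = ψ ^ (-θ)` turns the differential inequality into `u'' ≤ 0`, since
`u'' = -θ ψ ^ (-θ - 2) (ψ'' ψ - (1 + θ) ψ' ^ 2)`. A concave function lies below its tangent at `0`,
and that tangent, `ψ 0 ^ (-θ) (1 - t / T)` with `T = ψ 0 / (θ ψ' 0)`, vanishes at `T`. So the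
positive function `ψ ^ (-θ)` is squeezed to `0` as `t → T⁻`, that is, `ψ → ∞`.
-/

lemma ConcaveOn.le_add_mul_sub_of_hasDerivAt {S : Set ℝ} {f : ℝ → ℝ} {f' x y : ℝ}
    (hfc : ConcaveOn ℝ S f) (hx : x ∈ S) (hy : y ∈ S) (hxy : x ≤ y) (hf' : HasDerivAt f f' x) :
    f y ≤ f x + f' * (y - x) := by
  rcases hxy.eq_or_lt with rfl | hlt
  · simp
  have hslope := hfc.slope_le_of_hasDerivAt hx hy hlt hf'
  rw [slope_def_field, div_le_iff₀ (sub_pos.2 hlt)] at hslope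
  linarith

lemma HasDerivAt.mul_rpow_sub_one {ψ ψ' : ℝ → ℝ} {ψ'' p t : ℝ}
    (h1 : HasDerivAt ψ (ψ' t) t) (h2 : HasDerivAt ψ' ψ'' t) (hψ : 0 < ψ t) :
    HasDerivAt (fun s => ψ' s * p * ψ s ^ (p - 1))
      (p * ψ t ^ (p - 2) * (ψ'' * ψ t + (p - 1) * ψ' t ^ 2)) t := by
  refine ((h2.mul_const p).mul (h1.rpow_const (p := p - 1) (Or.inl hψ.ne'))).congr_deriv ?_
  rw [show p - 1 - 1 = p - 2 by ring, show p - 1 = p - 2 + 1 by ring, rpow_add_one hψ.ne']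
  ring

lemma concaveOn_rpow_neg_of_levine_inequality {D : Set ℝ} (hD : Convex ℝ D)
    {ψ ψ' ψ'' : ℝ → ℝ} {θ : ℝ} (hθ : 0 ≤ θ)
    (hd1 : ∀ t ∈ D, HasDerivAt ψ (ψ' t) t) (hd2 : ∀ t ∈ D, HasDerivAt ψ' (ψ'' t) t)
    (hpos : ∀ t ∈ D, 0 < ψ t) (hineq : ∀ t ∈ D, 0 ≤ ψ'' t * ψ t - (1 + θ) * ψ' t ^ 2) :
    ConcaveOn ℝ D (fun t => ψ t ^ (-θ)) := by
  have hu : ∀ t ∈ D, HasDerivAt (fun s => ψ s ^ (-θ)) (ψ' t * -θ * ψ t ^ (-θ - 1)) t :=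
    fun t ht => (hd1 t ht).rpow_const (Or.inl (hpos t ht).ne')
  refine concaveOn_of_hasDerivWithinAt2_nonpos hD
    (fun t ht => (hu t ht).continuousAt.continuousWithinAt)
    (fun t ht => (hu t (interior_subset ht)).hasDerivWithinAt)
    (fun t ht => ((hd1 t (interior_subset ht)).mul_rpow_sub_one (hd2 t (interior_subset ht))
      (hpos t (interior_subset ht))).hasDerivWithinAt) fun t ht => ?_
  have ht := interior_subset ht
  refine mul_nonpos_of_nonpos_of_nonneg
    (mul_nonpos_of_nonpos_of_nonneg (neg_nonpos.2 hθ) (rpow_nonneg (hpos t ht).le _)) ?_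
  linarith [hineq t ht]

lemma tendsto_atTop_of_tendsto_rpow_neg_zero {α : Type*} {l : Filter α} {f : α → ℝ} {θ : ℝ}
    (hθ : 0 < θ) (hf : ∀ᶠ x in l, 0 < f x) (h : Tendsto (fun x => f x ^ (-θ)) l (𝓝 0)) :
    Tendsto f l atTop := by
  have h' : Tendsto (fun x => f x ^ (-θ)) l (𝓝[>] 0) :=
    tendsto_nhdsWithin_iff.2 ⟨h, hf.mono fun x hx => rpow_pos_of_pos hx _⟩
  refine ((tendsto_rpow_neg_nhdsGT_zero (neg_neg_of_pos (inv_pos.2 hθ))).comp h').congr' ?_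
  filter_upwards [hf] with x hx
  simp [← rpow_mul hx.le, hθ.ne']

/-- Levine concavity lemma: if a positive twice-differentiable function `ψ` satisfies
`ψ'' ψ - (1+θ) (ψ')² ≥ 0` on `[0, ψ 0 / (θ ψ' 0))` with `ψ 0 > 0`, `ψ' 0 > 0`,
then `ψ t → ∞` as `t → tb⁻` for some `tb ≤ ψ 0 / (θ ψ' 0)`. -/
theorem levine_concavity_blowup (ψ ψ' ψ'' : ℝ → ℝ) (θ : ℝ) (hθ : 0 < θ)
    (hd1 : ∀ t ∈ Set.Ico (0 : ℝ) (ψ 0 / (θ * ψ' 0)), HasDerivAt ψ (ψ' t) t)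
    (hd2 : ∀ t ∈ Set.Ico (0 : ℝ) (ψ 0 / (θ * ψ' 0)), HasDerivAt ψ' (ψ'' t) t)
    (hpos : ∀ t ∈ Set.Ico (0 : ℝ) (ψ 0 / (θ * ψ' 0)), 0 < ψ t)
    (hineq : ∀ t ∈ Set.Ico (0 : ℝ) (ψ 0 / (θ * ψ' 0)),
      0 ≤ ψ'' t * ψ t - (1 + θ) * (ψ' t) ^ 2)
    (h0 : 0 < ψ 0) (h0' : 0 < ψ' 0) :
    ∃ tb : ℝ, tb ≤ ψ 0 / (θ * ψ' 0) ∧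
      Tendsto ψ (nhdsWithin tb (Set.Iio tb)) atTop := by
  set T := ψ 0 / (θ * ψ' 0)
  have hT : 0 < T := div_pos h0 (mul_pos hθ h0')
  have hTψ' : T * (θ * ψ' 0) = ψ 0 := div_mul_cancel₀ _ (mul_pos hθ h0').ne'
  have hconc := concaveOn_rpow_neg_of_levine_inequality (convex_Ico 0 T) hθ.le hd1 hd2 hpos hineq
  have htangent : ∀ t ∈ Ico 0 T, ψ t ^ (-θ) ≤ ψ 0 ^ (-θ) * (1 - t / T) := fun t ht => by
    convert hconc.le_add_mul_sub_of_hasDerivAt ⟨le_rfl, hT⟩ ht ht.1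
      ((hd1 0 ⟨le_rfl, hT⟩).rpow_const (Or.inl h0.ne')) using 1
    rw [rpow_sub_one h0.ne']
    field_simp
    linear_combination t * hTψ'
  have hnear : ∀ᶠ t in 𝓝[<] T, t ∈ Ico 0 T := Ico_mem_nhdsLT hT
  have htangent_lim : Tendsto (fun t => ψ 0 ^ (-θ) * (1 - t / T)) (𝓝[<] T) (𝓝 0) :=
    ((continuous_const.mul (continuous_const.sub (continuous_id.div_const T))).tendsto' T 0
      (by simp [hT.ne'])).mono_left nhdsWithin_le_nhds
  refine ⟨T, le_rfl, tendsto_atTop_of_tendsto_rpow_neg_zero hθ (hnear.mono hpos) ?_⟩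
  exact tendsto_of_tendsto_of_tendsto_of_le_of_le' tendsto_const_nhds htangent_lim
    (hnear.mono fun t ht => (rpow_pos_of_pos (hpos t ht) _).le) (hnear.mono htangent)
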